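/- arXiv:1401.7818 — 3 statements merged into one kernel-verified Lean document; each statement's English description precedes it below -/
import Mathlib

section
/- Let F be a free filter on ℕ whose dual ideal is countably generated, i.e., there is a partition (A_k) of ℕ into nonempty sets such that the dual ideal consists exactly of all finite unions of subsets of the sets A_k. Then for every F-stationary set J (a set not in the dual ideal) there exists an F-stationary subset J' ⊆ J such that every infinite subset of J' is F-stationary. -/
/-- A filter on ℕ, as a family of subsets: nonempty (contains `univ`), not containing `∅`,
closed under finite intersections and supersets. -/
def IsSetFilter (F : Set (Set ℕ)) : Prop :=
  Set.univ ∈ F ∧ ∅ ∉ F ∧ (∀ A ∈ F, ∀ B ∈ F, A ∩ B ∈ F) ∧ ∀ A ∈ F, ∀ B : Set ℕ, A ⊆ B → B ∈ F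

/-- A filter is free if its dual ideal contains all finite sets, i.e. the complement of
every finite set belongs to the filter. -/
def IsFreeSetFilter (F : Set (Set ℕ)) : Prop :=
  IsSetFilter F ∧ ∀ S : Set ℕ, S.Finite → Sᶜ ∈ F

/-- `H` is `F`-stationary iff it does not belong to the dual ideal of `F`,
i.e. `Hᶜ ∉ F`. -/
def FStationary (F : Set (Set ℕ)) (H : Set ℕ) : Prop := Hᶜ ∉ F

/-- The dual ideal of `F` is countably generated by the partition `A` of ℕ into
pairwise disjoint nonempty sets: it consists exactly of the finite unions of subsets
of the sets `A k`. -/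
def CountablyGeneratedBy (F : Set (Set ℕ)) (A : ℕ → Set ℕ) : Prop :=
  (∀ k, (A k).Nonempty) ∧ Pairwise (Function.onFun Disjoint A) ∧ (⋃ k, A k) = Set.univ ∧
    ∀ S : Set ℕ, Sᶜ ∈ F ↔ ∃ T : Finset ℕ, ∃ B : ℕ → Set ℕ,
      (∀ k ∈ T, B k ⊆ A k) ∧ S = ⋃ k ∈ T, B k

/-- `F` is super-diagonal: every stationary set has a stationary subset all of whose
infinite subsets are stationary. -/
def SuperDiagonal (F : Set (Set ℕ)) : Prop :=
  ∀ I : Set ℕ, FStationary F I →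
    ∃ J ⊆ I, FStationary F J ∧ ∀ K ⊆ J, K.Infinite → FStationary F K

/-- `F` is diagonal: for every sequence `(A n)` of members of `F` and every stationary
set `I` there exists a stationary `J ⊆ I` with `J \ A n` finite for all `n`. -/
def DiagonalFilter (F : Set (Set ℕ)) : Prop :=
  ∀ A : ℕ → Set ℕ, (∀ n, A n ∈ F) → ∀ I : Set ℕ, FStationary F I →
    ∃ J ⊆ I, FStationary F J ∧ ∀ n, (J \ A n).Finite

/-- `F` is block-respecting: for every stationary set `H` and every partition `(D k)`
of `H` into finite sets, there is a stationary `J ⊆ H` with `|J ∩ D k| ≤ 1` for all `k`. -/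
def BlockRespecting (F : Set (Set ℕ)) : Prop :=
  ∀ H : Set ℕ, FStationary F H → ∀ D : ℕ → Set ℕ, (∀ k, (D k).Finite) →
    Pairwise (Function.onFun Disjoint D) → (⋃ k, D k) = H →
    ∃ J ⊆ H, FStationary F J ∧ ∀ k, (J ∩ D k).Subsingleton

/-! With respect to a filter whose dual ideal is generated by a partition `(A k)`, a set is
stationary exactly when it meets infinitely many blocks `A k`. Keeping one point of `J` in
each block it meets gives a stationary `J' ⊆ J` that meets every block at most once; an
infinite subset of `J'` then meets infinitely many blocks, so it is stationary as well. -/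

open Set

section Blocks

variable {α ι : Type*} {A : ι → Set α}

theorem infinite_setOf_inter_nonempty_of_subsingleton (hcover : ⋃ k, A k = univ) {K : Set α}
    (hsub : ∀ k, (K ∩ A k).Subsingleton) (hK : K.Infinite) :
    {k | (K ∩ A k).Nonempty}.Infinite := by
  intro hfin
  refine hK ((hfin.biUnion fun k _ => (hsub k).finite).subset fun x hx => ?_)
  obtain ⟨k, hk⟩ := mem_iUnion.1 (hcover ▸ mem_univ x : x ∈ ⋃ k, A k)
  exact mem_biUnion (x := k) ⟨x, hx, hk⟩ ⟨hx, hk⟩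

theorem exists_subset_subsingleton_inter_blocks (hdisj : Pairwise (Function.onFun Disjoint A)) (J : Set α) :
    ∃ J' ⊆ J, (∀ k, (J' ∩ A k).Subsingleton) ∧
      ∀ k, (J ∩ A k).Nonempty → (J' ∩ A k).Nonempty := by
  refine ⟨⋃ k, ⋃ h : (J ∩ A k).Nonempty, {h.some}, ?_, ?_, ?_⟩
  · simp only [iUnion_subset_iff, singleton_subset_iff]
    exact fun k h => h.some_mem.1
  · have key : ∀ k, ∀ x ∈ (⋃ k, ⋃ h : (J ∩ A k).Nonempty, {h.some}) ∩ A k,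
        ∃ h : (J ∩ A k).Nonempty, x = h.some := by
      rintro k x ⟨hx, hxk⟩
      simp only [mem_iUnion, mem_singleton_iff] at hx
      obtain ⟨j, h, rfl⟩ := hx
      obtain rfl : j = k := by
        by_contra hjk
        exact disjoint_left.1 (hdisj hjk) h.some_mem.2 hxk
      exact ⟨h, rfl⟩
    intro k x hx y hy
    obtain ⟨_, rfl⟩ := key k x hx
    obtain ⟨_, rfl⟩ := key k y hy
    rfl
  · intro k h
    exact ⟨h.some, mem_iUnion₂.2 ⟨k, h, rfl⟩, h.some_mem.2⟩

end Blocks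

namespace CountablyGeneratedBy

variable {F : Set (Set ℕ)} {A : ℕ → Set ℕ}

theorem compl_mem_iff (hgen : CountablyGeneratedBy F A) (S : Set ℕ) :
    Sᶜ ∈ F ↔ {k | (S ∩ A k).Nonempty}.Finite := by
  obtain ⟨-, hdisj, hcover, hiff⟩ := hgen
  rw [hiff]
  constructor
  · rintro ⟨T, B, hB, rfl⟩
    refine T.finite_toSet.subset ?_
    rintro j ⟨x, hxS, hxA⟩
    obtain ⟨k, hk, hxB⟩ := mem_iUnion₂.1 hxS
    obtain rfl : j = k := by
      by_contra hjk
      exact disjoint_left.1 (hdisj hjk) hxA (hB k hk hxB)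
    exact hk
  · intro hfin
    refine ⟨hfin.toFinset, fun k => S ∩ A k, fun k _ => inter_subset_right, ?_⟩
    ext x
    simp only [mem_iUnion, Finite.mem_toFinset, mem_ofPred_eq, exists_prop]
    refine ⟨fun hx => ?_, fun ⟨_, _, hx⟩ => hx.1⟩
    obtain ⟨k, hk⟩ := mem_iUnion.1 (hcover ▸ mem_univ x : x ∈ ⋃ k, A k)
    exact ⟨k, ⟨x, hx, hk⟩, hx, hk⟩

theorem fStationary_iff (hgen : CountablyGeneratedBy F A) (S : Set ℕ) :
    FStationary F S ↔ {k | (S ∩ A k).Nonempty}.Infinite :=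
  (hgen.compl_mem_iff S).not

end CountablyGeneratedBy

theorem stmt0_general (F : Set (Set ℕ)) (A : ℕ → Set ℕ)
    (hgen : CountablyGeneratedBy F A)
    (J : Set ℕ) (hJ : FStationary F J) :
    ∃ J' ⊆ J, FStationary F J' ∧ ∀ K ⊆ J', K.Infinite → FStationary F K := by
  obtain ⟨J', hJ'J, hsub, hmeet⟩ := exists_subset_subsingleton_inter_blocks hgen.2.1 J
  refine ⟨J', hJ'J, ?_, fun K hK hKinf => ?_⟩
  · rw [hgen.fStationary_iff] at hJ ⊢
    exact hJ.mono hmeet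
  · rw [hgen.fStationary_iff]
    exact infinite_setOf_inter_nonempty_of_subsingleton hgen.2.2.1
      (fun k => (hsub k).anti (inter_subset_inter_left _ hK)) hKinf

/-- if the free filter `F` has countably generated dual ideal, then every
stationary set `J` has a stationary subset `J'` all of whose infinite subsets are stationary. -/
theorem stmt0 (F : Set (Set ℕ)) (A : ℕ → Set ℕ)
    (hF : IsFreeSetFilter F) (hgen : CountablyGeneratedBy F A)
    (J : Set ℕ) (hJ : FStationary F J) :
    ∃ J' ⊆ J, FStationary F J' ∧ ∀ K ⊆ J', K.Infinite → FStationary F K :=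
  stmt0_general F A hgen J hJ
end

section
/- If a free filter F on ℕ is super-diagonal (every F-stationary set contains an F-stationary subset all of whose infinite subsets are F-stationary), then F is diagonal: for every sequence (A_n) in F and every F-stationary set I there is an F-stationary J ⊆ I with J \ A_n finite for all n. -/
/-!
A free `F` is a filter finer than the cofinite one, and `J` is stationary iff
`∃ᶠ x in F, x ∈ J`. A stationary `J` then meets every finite intersection
`A 0 ∩ ⋯ ∩ A n` in an infinite set, so a strictly increasing `φ` with
`φ n ∈ J ∩ A 0 ∩ ⋯ ∩ A n` exists, and `K = range φ` satisfies `K \ A n ⊆ φ '' {0, …, n - 1}`.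
Super-diagonality makes the infinite subset `K` of a suitable stationary `J ⊆ I` stationary.
-/

open Filter

theorem Filter.exists_infinite_subset_diff_finite {f : Filter ℕ} (hf : f ≤ cofinite)
    {J : Set ℕ} (hJ : ∃ᶠ x in f, x ∈ J) {A : ℕ → Set ℕ} (hA : ∀ n, A n ∈ f) :
    ∃ K ⊆ J, K.Infinite ∧ ∀ n, (K \ A n).Finite := by
  have hfreq : ∀ n, ∃ᶠ x in atTop, x ∈ J ∧ ∀ i ∈ Set.Iic n, x ∈ A i := fun n => by
    have hAll : ∀ᶠ x in f, ∀ i ∈ Set.Iic n, x ∈ A i :=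
      (eventually_all_finite (Set.finite_Iic n)).2 fun i _ => hA i
    rw [← Nat.cofinite_eq_atTop]
    exact (hJ.and_eventually hAll).filter_mono hf
  obtain ⟨φ, hφ, hφJA⟩ := extraction_forall_of_frequently hfreq
  refine ⟨Set.range φ, Set.range_subset_iff.2 fun n => (hφJA n).1,
    Set.infinite_range_of_injective hφ.injective, fun n => ?_⟩
  refine ((Set.finite_Iio n).image φ).subset ?_
  rintro _ ⟨⟨m, rfl⟩, hmA⟩
  refine ⟨m, Set.mem_Iio.2 (lt_of_not_ge fun hnm => hmA ?_), rfl⟩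
  exact (hφJA m).2 n hnm

namespace IsSetFilter

variable {F : Set (Set ℕ)}

def toFilter (hF : IsSetFilter F) : Filter ℕ where
  sets := F
  univ_sets := hF.1
  sets_of_superset hA hAB := hF.2.2.2 _ hA _ hAB
  inter_sets hA hB := hF.2.2.1 _ hA _ hB

theorem fStationary_iff_frequently (hF : IsSetFilter F) {J : Set ℕ} :
    FStationary F J ↔ ∃ᶠ x in hF.toFilter, x ∈ J :=
  Iff.rfl

end IsSetFilter

theorem IsFreeSetFilter.toFilter_le_cofinite {F : Set (Set ℕ)} (hF : IsFreeSetFilter F) :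
    hF.1.toFilter ≤ cofinite := fun S hS => show S ∈ F by
  simpa only [compl_compl] using hF.2 _ (mem_cofinite.1 hS)

/-- a super-diagonal free filter is diagonal. -/
theorem stmt3 (F : Set (Set ℕ)) (hF : IsFreeSetFilter F) (hsd : SuperDiagonal F) :
    DiagonalFilter F := by
  intro A hA I hI
  obtain ⟨J, hJI, hJ, hJsub⟩ := hsd I hI
  obtain ⟨K, hKJ, hKinf, hKA⟩ := exists_infinite_subset_diff_finite hF.toFilter_le_cofinite
    (hF.1.fStationary_iff_frequently.1 hJ) hA
  exact ⟨K, hKJ.trans hJI, hJsub K hKJ hKinf, hKA⟩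
end

section
/- If a free filter F on ℕ is super-diagonal, then F is block-respecting: for every F-stationary set H and every partition of H into finite sets {D_k}, there is an F-stationary set J ⊆ H meeting each D_k in at most one point. -/
theorem FStationary.infinite {F : Set (Set ℕ)} (hF : IsFreeSetFilter F) {H : Set ℕ}
    (hH : FStationary F H) : H.Infinite :=
  fun hfin => hH (hF.2 H hfin)

namespace Set

variable {α ι : Type*} {J : Set α} {D : ι → Set α}

theorem infinite_setOf_inter_nonempty (hJ : J.Infinite) (hD : ∀ k, (D k).Finite)
    (hcover : J ⊆ ⋃ k, D k) : {k | (J ∩ D k).Nonempty}.Infinite := by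
  intro hfin
  refine hJ ((hfin.biUnion fun k _ => hD k).subset fun x hx => ?_)
  obtain ⟨k, hk⟩ := mem_iUnion.mp (hcover hx)
  exact mem_biUnion ⟨x, hx, hk⟩ hk

theorem exists_infinite_subset_inter_subsingleton (hJ : J.Infinite) (hD : ∀ k, (D k).Finite)
    (hdisj : Pairwise (Function.onFun Disjoint D)) (hcover : J ⊆ ⋃ k, D k) :
    ∃ J' ⊆ J, J'.Infinite ∧ ∀ k, (J' ∩ D k).Subsingleton := by
  set S := {k | (J ∩ D k).Nonempty}
  have : Infinite S := (infinite_setOf_inter_nonempty hJ hD hcover).to_subtype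
  let pick : S → α := fun k => k.2.some
  have pick_mem (k : S) : pick k ∈ J ∩ D k := k.2.some_mem
  have eq_of_pick_mem {k : S} {j : ι} (hj : pick k ∈ D j) : (k : ι) = j :=
    hdisj.eq (not_disjoint_iff.mpr ⟨pick k, (pick_mem k).2, hj⟩)
  refine ⟨range pick, range_subset_iff.mpr fun k => (pick_mem k).1, infinite_range_of_injective
    fun k l hkl => Subtype.ext (eq_of_pick_mem (hkl ▸ (pick_mem l).2)), fun j => ?_⟩
  rintro _ ⟨⟨k, rfl⟩, hk⟩ _ ⟨⟨l, rfl⟩, hl⟩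
  rw [Subtype.ext ((eq_of_pick_mem hk).trans (eq_of_pick_mem hl).symm)]

end Set

/-- a super-diagonal free filter is block-respecting. -/
theorem stmt4 (F : Set (Set ℕ)) (hF : IsFreeSetFilter F) (hsd : SuperDiagonal F) :
    BlockRespecting F := by
  intro H hH D hDfin hDdisj hDunion
  obtain ⟨J, hJH, hJ, hJsub⟩ := hsd H hH
  obtain ⟨J', hJ'J, hJ'inf, hJ'D⟩ :=
    Set.exists_infinite_subset_inter_subsingleton (hJ.infinite hF) hDfin hDdisj (hDunion ▸ hJH)
  exact ⟨J', hJ'J.trans hJH, hJsub J' hJ'J hJ'inf, hJ'D⟩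
end
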